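/- arXiv:1310.8094 — 4 statements merged into one kernel-verified Lean document; each statement's English description precedes it below -/
import Mathlib

section
/- For every z ∈ ℂ₊ one has 1 − |z|² γ(z,z*) γ̃(z,z*) > 0, where γ(z,z*) = c ∫ t²/(|z|² |1+δ̃(z)t|²) dν(t) and γ̃(z,z*) = ∫ t²/(|z|² |1+δ(z)t|²) dν̃(t). -/
open MeasureTheory Set Filter Topology

noncomputable section

/-- The open upper half plane of `ℂ`. -/
def UpperHalf : Set ℂ := {z : ℂ | 0 < z.im}

/-- `(d, dt)` is a solution in `ℂ₊ × ℂ₊` of the master system of equations at the point `z`. -/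
def IsPair (ν νt : Measure ℝ) (c : ℝ) (z d dt : ℂ) : Prop :=
  d ∈ UpperHalf ∧ dt ∈ UpperHalf ∧
  d = (c : ℂ) * ∫ t, (t : ℂ) / (-z * (1 + dt * (t : ℂ))) ∂ν ∧
  dt = ∫ t, (t : ℂ) / (-z * (1 + d * (t : ℂ))) ∂νt

/-!
Write `δ = δ(z)`, `δ̃ = δ̃(z)` and use `Im (t / -u) = t Im u / |u|²` for real `t`. The imaginary
part of the first equation is `Im δ = c Im z ∫ t / |z (1 + δ̃ t)|² dν + Im (z δ̃) γ`, and multiplying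
the second one by `z` gives `Im (z δ̃) = |z|² γ̃ Im δ`. Hence
`Im δ (1 - |z|² γ γ̃) = c Im z ∫ t / |z (1 + δ̃ t)|² dν`, which is positive because `ν` lives on
`ℝ₊` and is not `δ₀`. All integrands are bounded since `|1 + w t| ≥ |t| Im w` and
`|1 + w t| ≥ Im w / |w|`.
-/

namespace Complex

lemma abs_mul_abs_im_le_norm_one_add_mul_ofReal (w : ℂ) (t : ℝ) :
    |t| * |w.im| ≤ ‖1 + w * t‖ := by
  calc |t| * |w.im| = |(1 + w * t).im| := by simp [abs_mul, mul_comm]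
    _ ≤ ‖1 + w * t‖ := abs_im_le_norm _

lemma abs_im_le_norm_one_add_mul_ofReal_mul_norm (w : ℂ) (t : ℝ) :
    |w.im| ≤ ‖1 + w * t‖ * ‖w‖ := by
  -- `(1 + w t) w̄ = w̄ + t |w|²`
  calc |w.im| = |((1 + w * t) * (starRingEnd ℂ) w).im| := by
        simp [mul_im]; ring_nf; rw [abs_neg]
    _ ≤ ‖(1 + w * t) * (starRingEnd ℂ) w‖ := abs_im_le_norm _
    _ = ‖1 + w * t‖ * ‖w‖ := by rw [norm_mul, norm_conj]

lemma one_add_mul_ofReal_ne_zero {w : ℂ} (hw : w.im ≠ 0) (t : ℝ) : 1 + w * t ≠ 0 := by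
  intro h
  have := abs_im_le_norm_one_add_mul_ofReal_mul_norm w t
  rw [h, norm_zero, zero_mul] at this
  exact hw (abs_nonpos_iff.mp this)

lemma abs_div_norm_one_add_mul_ofReal_le {w : ℂ} (hw : w.im ≠ 0) (t : ℝ) :
    |t| / ‖1 + w * t‖ ≤ |w.im|⁻¹ := by
  rw [div_le_iff₀ (norm_pos_iff.2 (one_add_mul_ofReal_ne_zero hw t)), inv_mul_eq_div,
    le_div_iff₀ (abs_pos.2 hw)]
  exact abs_mul_abs_im_le_norm_one_add_mul_ofReal w t

lemma inv_norm_one_add_mul_ofReal_le {w : ℂ} (hw : w.im ≠ 0) (t : ℝ) :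
    ‖1 + w * t‖⁻¹ ≤ ‖w‖ / |w.im| := by
  rw [inv_le_iff_one_le_mul₀' (norm_pos_iff.2 (one_add_mul_ofReal_ne_zero hw t)), mul_div_assoc',
    le_div_iff₀ (abs_pos.2 hw), one_mul]
  exact abs_im_le_norm_one_add_mul_ofReal_mul_norm w t

lemma im_ofReal_div_neg_mul_one_add_mul (u w : ℂ) (t : ℝ) :
    ((t : ℂ) / (-u * (1 + w * t))).im
      = u.im * (t / (‖u‖ ^ 2 * ‖1 + w * t‖ ^ 2))
        + (u * w).im * (t ^ 2 / (‖u‖ ^ 2 * ‖1 + w * t‖ ^ 2)) := by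
  rw [div_im, ← mul_pow, ← norm_mul, ← normSq_eq_norm_sq, neg_mul, normSq_neg]
  simp [mul_im, mul_re]
  ring

end Complex

section

open Complex

variable {μ : Measure ℝ} [IsFiniteMeasure μ] {w : ℂ}

lemma integrable_ofReal_div_mul_one_add_mul (hw : w.im ≠ 0) (u : ℂ) :
    Integrable (fun t : ℝ => (t : ℂ) / (u * (1 + w * t))) μ := by
  refine .of_bound (by fun_prop : Measurable _).aestronglyMeasurable (‖u‖⁻¹ * |w.im|⁻¹)
    (ae_of_all _ fun t => ?_)
  rw [norm_div, norm_mul, norm_real, Real.norm_eq_abs, div_mul_eq_div_div_swap, div_eq_inv_mul]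
  gcongr
  exact abs_div_norm_one_add_mul_ofReal_le hw t

lemma integrable_div_mul_norm_one_add_mul_sq (hw : w.im ≠ 0) (κ : ℝ) :
    Integrable (fun t : ℝ => t / (κ * ‖1 + w * t‖ ^ 2)) μ := by
  refine .of_bound (by fun_prop : Measurable _).aestronglyMeasurable
    (|κ|⁻¹ * (|w.im|⁻¹ * (‖w‖ / |w.im|))) (ae_of_all _ fun t => ?_)
  rw [Real.norm_eq_abs, abs_div, abs_mul, abs_pow, abs_norm, div_mul_eq_div_div_swap,
    div_eq_inv_mul, sq, ← div_div, div_eq_mul_inv _ ‖1 + w * t‖]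
  gcongr
  exacts [abs_div_norm_one_add_mul_ofReal_le hw t, inv_norm_one_add_mul_ofReal_le hw t]

lemma integrable_sq_div_mul_norm_one_add_mul_sq (hw : w.im ≠ 0) (κ : ℝ) :
    Integrable (fun t : ℝ => t ^ 2 / (κ * ‖1 + w * t‖ ^ 2)) μ := by
  refine .of_bound (by fun_prop : Measurable _).aestronglyMeasurable (|κ|⁻¹ * |w.im|⁻¹ ^ 2)
    (ae_of_all _ fun t => ?_)
  rw [Real.norm_eq_abs, abs_div, abs_mul, abs_pow, abs_pow, abs_norm, div_mul_eq_div_div_swap,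
    div_eq_inv_mul, ← div_pow]
  gcongr
  exact abs_div_norm_one_add_mul_ofReal_le hw t

lemma im_integral_ofReal_div_neg_mul_one_add_mul (hw : w.im ≠ 0) (u : ℂ) :
    (∫ t, (t : ℂ) / (-u * (1 + w * t)) ∂μ).im
      = u.im * ∫ t, t / (‖u‖ ^ 2 * ‖1 + w * t‖ ^ 2) ∂μ
        + (u * w).im * ∫ t, t ^ 2 / (‖u‖ ^ 2 * ‖1 + w * t‖ ^ 2) ∂μ := by
  rw [← RCLike.im_to_complex, ← integral_im (integrable_ofReal_div_mul_one_add_mul hw (-u)),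
    ← integral_const_mul, ← integral_const_mul,
    ← integral_add ((integrable_div_mul_norm_one_add_mul_sq hw _).const_mul _)
      ((integrable_sq_div_mul_norm_one_add_mul_sq hw _).const_mul _)]
  exact integral_congr_ae (ae_of_all _ fun t => im_ofReal_div_neg_mul_one_add_mul u w t)

lemma im_mul_integral_ofReal_div_neg_mul_one_add_mul (hw : w.im ≠ 0) {u : ℂ} (hu : u ≠ 0) :
    (u * ∫ t, (t : ℂ) / (-u * (1 + w * t)) ∂μ).im = w.im * ∫ t, t ^ 2 / ‖1 + w * t‖ ^ 2 ∂μ := by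
  have h : u * ∫ t, (t : ℂ) / (-u * (1 + w * t)) ∂μ = ∫ t, (t : ℂ) / (-1 * (1 + w * t)) ∂μ := by
    rw [← integral_const_mul]
    refine integral_congr_ae (ae_of_all _ fun t => ?_)
    field_simp [one_add_mul_ofReal_ne_zero hw t]
  rw [h, im_integral_ofReal_div_neg_mul_one_add_mul hw 1]
  simp

end

lemma MeasureTheory.Measure.eq_dirac_of_ae_eq {α : Type*} [MeasurableSpace α] {μ : Measure α}
    [IsProbabilityMeasure μ] {a : α} (h : ∀ᵐ x ∂μ, x = a) : μ = Measure.dirac a := by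
  rw [← Measure.map_id (μ := μ), Measure.map_congr (f := id) (g := fun _ => a) h,
    Measure.map_const, measure_univ, one_smul]

lemma integral_pos_of_ne_dirac_zero {μ : Measure ℝ} [IsProbabilityMeasure μ]
    (hμ : μ ≠ Measure.dirac 0) (hμ_nonneg : μ (Iio 0) = 0) {f : ℝ → ℝ} (hf : Integrable f μ)
    (hf_nonneg : ∀ t, 0 ≤ t → 0 ≤ f t) (hf_pos : ∀ t, 0 < t → 0 < f t) :
    0 < ∫ t, f t ∂μ := by
  have h_ae_nonneg : ∀ᵐ t ∂μ, 0 ≤ t := by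
    rw [ae_iff]
    simpa [Iio] using hμ_nonneg
  have h_Ioi : μ (Ioi 0) ≠ 0 := fun h0 => hμ <| Measure.eq_dirac_of_ae_eq <| by
    filter_upwards [h_ae_nonneg, measure_eq_zero_iff_ae_notMem.1 h0] with t ht ht'
    exact le_antisymm (not_lt.1 ht') ht
  rw [integral_pos_iff_support_of_nonneg_ae (h_ae_nonneg.mono hf_nonneg) hf]
  exact (pos_iff_ne_zero.2 h_Ioi).trans_le (measure_mono fun t ht => (hf_pos t ht).ne')

theorem stmt1_general (ν νt : Measure ℝ) [IsProbabilityMeasure ν] [IsProbabilityMeasure νt]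
    (hνpos : ν (Set.Iio (0 : ℝ)) = 0)
    (hν0 : ν ≠ Measure.dirac 0)
    (c : ℝ) (hc : 0 < c)
    (δ δt : ℂ → ℂ) (hsol : ∀ z ∈ UpperHalf, IsPair ν νt c z (δ z) (δt z)) :
    ∀ z ∈ UpperHalf,
      0 < 1 - ‖z‖ ^ 2
          * (c * ∫ t, t ^ 2 / (‖z‖ ^ 2 * ‖1 + δt z * (t : ℂ)‖ ^ 2) ∂ν)
          * (∫ t, t ^ 2 / (‖z‖ ^ 2 * ‖1 + δ z * (t : ℂ)‖ ^ 2) ∂νt) := by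
  intro z (hz : 0 < z.im)
  obtain ⟨ha : 0 < (δ z).im, hb : 0 < (δt z).im, ha_eq, hb_eq⟩ := hsol z hz
  have hz0 : z ≠ 0 := fun h => by simp [h] at hz
  set P := ∫ t, t / (‖z‖ ^ 2 * ‖1 + δt z * (t : ℂ)‖ ^ 2) ∂ν
  set Q := ∫ t, t ^ 2 / (‖z‖ ^ 2 * ‖1 + δt z * (t : ℂ)‖ ^ 2) ∂ν
  set R := ∫ t, t ^ 2 / ‖1 + δ z * (t : ℂ)‖ ^ 2 ∂νt
  have him_δ : (δ z).im = c * (z.im * P + (z * δt z).im * Q) := by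
    rw [ha_eq, Complex.im_ofReal_mul, im_integral_ofReal_div_neg_mul_one_add_mul hb.ne']
  have him_zδt : (z * δt z).im = (δ z).im * R := by
    rw [hb_eq, im_mul_integral_ofReal_div_neg_mul_one_add_mul ha.ne' hz0]
  have hR : ∫ t, t ^ 2 / (‖z‖ ^ 2 * ‖1 + δ z * (t : ℂ)‖ ^ 2) ∂νt = R / ‖z‖ ^ 2 := by
    rw [← integral_div]
    simp only [div_div, mul_comm]
  have hP : 0 < P := by
    refine integral_pos_of_ne_dirac_zero hν0 hνpos
      (integrable_div_mul_norm_one_add_mul_sq hb.ne' _) (fun t ht => by positivity)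
      (fun t ht => div_pos ht ?_)
    have := Complex.one_add_mul_ofReal_ne_zero hb.ne' t
    positivity
  have key : (δ z).im * (1 - c * Q * R) = c * z.im * P := by
    rw [him_zδt] at him_δ
    linear_combination him_δ
  rw [hR, mul_div_assoc', mul_div_right_comm, mul_div_cancel_left₀ _ (by positivity)]
  exact pos_of_mul_pos_right (key ▸ by positivity) ha.le

theorem stmt1 (ν νt : Measure ℝ) [IsProbabilityMeasure ν] [IsProbabilityMeasure νt]
    (hνpos : ν (Set.Iio (0 : ℝ)) = 0) (hνtpos : νt (Set.Iio (0 : ℝ)) = 0)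
    (hν0 : ν ≠ Measure.dirac 0) (hνt0 : νt ≠ Measure.dirac 0)
    (c : ℝ) (hc : 0 < c)
    (δ δt : ℂ → ℂ) (hsol : ∀ z ∈ UpperHalf, IsPair ν νt c z (δ z) (δt z)) :
    ∀ z ∈ UpperHalf,
      0 < 1 - ‖z‖ ^ 2
          * (c * ∫ t, t ^ 2 / (‖z‖ ^ 2 * ‖1 + δt z * (t : ℂ)‖ ^ 2) ∂ν)
          * (∫ t, t ^ 2 / (‖z‖ ^ 2 * ‖1 + δ z * (t : ℂ)‖ ^ 2) ∂νt) :=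
  stmt1_general ν νt hνpos hν0 c hc δ δt hsol
end
end

section
/- The functions z ↦ δ(z) and z ↦ δ̃(z) are holomorphic on ℂ₊. -/
open MeasureTheory Set Filter Topology

noncomputable section

/-!
Multiplied by `-z`, the system reads `F (z, δ, δ̃) = 0` for the map
`F (z, d, d̃) = (z d + c G_ν(d̃), z d̃ + G_ν̃(d))` (`masterMap`), where
`G_μ(w) = ∫ t / (1 + w t) dμ(t)` (`transform`) is holomorphic on `ℂ₊` with
`G_μ'(w) = -∫ (t / (1 + w t))² dμ(t)`. Taking imaginary parts of the two equations gives, for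
every solution in `ℂ₊ × ℂ₊`, `c E_ν(d̃) E_ν̃(d) < |z|²` with `E_μ(w) = ∫ |t / (1 + w t)|² dμ(t)`
(`energy`); it is strict because `d ≠ 0` forces `ν` to charge `(0, ∞)`. Together with
Cauchy–Schwarz, this bound shows both that the partial derivative of `F` in `(d, d̃)` is invertible
and that the solution in `ℂ₊ × ℂ₊` is unique. The implicit function theorem then gives a
holomorphic local solution, which must be `(δ, δ̃)`.
-/

lemma sq_integral_norm_mul_norm_le {α E : Type*} [MeasurableSpace α] {μ : Measure α}
    [NormedAddCommGroup E] {f g : α → E} (hf : MemLp f 2 μ) (hg : MemLp g 2 μ) :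
    (∫ a, ‖f a‖ * ‖g a‖ ∂μ) ^ 2 ≤ (∫ a, ‖f a‖ ^ 2 ∂μ) * ∫ a, ‖g a‖ ^ 2 ∂μ := by
  have h := integral_mul_norm_le_Lp_mul_Lq (μ := μ) Real.HolderConjugate.two_two
    (by simpa using hf) (by simpa using hg)
  simp only [Real.rpow_two] at h
  have hf0 : 0 ≤ ∫ a, ‖f a‖ ^ 2 ∂μ := integral_nonneg fun _ => by positivity
  have hg0 : 0 ≤ ∫ a, ‖g a‖ ^ 2 ∂μ := integral_nonneg fun _ => by positivity
  calc (∫ a, ‖f a‖ * ‖g a‖ ∂μ) ^ 2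
      ≤ ((∫ a, ‖f a‖ ^ 2 ∂μ) ^ (1 / 2 : ℝ) * (∫ a, ‖g a‖ ^ 2 ∂μ) ^ (1 / 2 : ℝ)) ^ 2 :=
        pow_le_pow_left₀ (integral_nonneg fun _ => by positivity) h 2
    _ = (∫ a, ‖f a‖ ^ 2 ∂μ) * ∫ a, ‖g a‖ ^ 2 ∂μ := by
        rw [mul_pow, ← Real.sqrt_eq_rpow, ← Real.sqrt_eq_rpow, Real.sq_sqrt hf0, Real.sq_sqrt hg0]

lemma ContinuousLinearMap.isInvertible_of_injective {𝕜 E : Type*} [NontriviallyNormedField 𝕜]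
    [CompleteSpace 𝕜] [NormedAddCommGroup E] [NormedSpace 𝕜 E] [FiniteDimensional 𝕜 E]
    {f : E →L[𝕜] E} (hf : Function.Injective f) : f.IsInvertible :=
  ⟨(LinearEquiv.ofInjectiveEndo f.toLinearMap hf).toContinuousLinearEquiv, rfl⟩

lemma eq_zero_of_mul_eq_of_norm_lt {𝕜 : Type*} [NormedField 𝕜] {z a b x y : 𝕜}
    (hab : ‖a * b‖ < ‖z‖ ^ 2) (hx : z * x = a * y) (hy : z * y = b * x) : x = 0 ∧ y = 0 := by
  have hne : z ^ 2 - a * b ≠ 0 := fun h => by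
    rw [← sub_eq_zero.1 h, norm_pow] at hab
    exact lt_irrefl _ hab
  constructor
  · refine (mul_eq_zero.1 ?_).resolve_left hne
    linear_combination z * hx + a * hy
  · refine (mul_eq_zero.1 ?_).resolve_left hne
    linear_combination z * hy + b * hx

namespace MasterSystem

open Complex ComplexConjugate

lemma isOpen_upperHalf : IsOpen UpperHalf := isOpen_lt continuous_const continuous_im

lemma ne_zero_of_mem_upperHalf {z : ℂ} (hz : z ∈ UpperHalf) : z ≠ 0 := by
  rintro rfl
  simp [UpperHalf] at hz

lemma half_im_lt_im_of_mem_ball {w v : ℂ} (hv : v ∈ Metric.ball w (w.im / 2)) :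
    w.im / 2 < v.im := by
  have h := (abs_im_le_norm (v - w)).trans_lt (mem_ball_iff_norm.1 hv)
  rw [sub_im] at h
  linarith [neg_abs_le (v.im - w.im)]

def kernel (w : ℂ) (t : ℝ) : ℂ := t / (1 + w * t)

section Kernel

variable {w : ℂ}

lemma im_one_add_mul (w : ℂ) (t : ℝ) : (1 + w * t).im = w.im * t := by simp

lemma one_add_mul_ne_zero (hw : 0 < w.im) (t : ℝ) : 1 + w * t ≠ 0 := by
  intro h
  have h' := im_one_add_mul w t
  rw [h, zero_im, eq_comm, mul_eq_zero] at h'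
  rcases h' with hw0 | rfl
  · exact hw.ne' hw0
  · simp at h

lemma norm_kernel_le (hw : 0 < w.im) (t : ℝ) : ‖kernel w t‖ ≤ w.im⁻¹ := by
  have h := abs_im_le_norm (1 + w * t)
  rw [im_one_add_mul, abs_mul, abs_of_pos hw] at h
  rw [kernel, norm_div, norm_real, Real.norm_eq_abs,
    div_le_iff₀ (norm_pos_iff.2 (one_add_mul_ne_zero hw t)), inv_mul_eq_div, le_div_iff₀ hw]
  linarith

lemma continuous_kernel (hw : 0 < w.im) : Continuous (kernel w) :=
  Continuous.div (by fun_prop) (by fun_prop) (one_add_mul_ne_zero hw)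

lemma kernel_sub_kernel {a b : ℂ} (ha : 0 < a.im) (hb : 0 < b.im) (t : ℝ) :
    kernel a t - kernel b t = -(a - b) * (kernel a t * kernel b t) := by
  rw [kernel, kernel, div_sub_div _ _ (one_add_mul_ne_zero ha t) (one_add_mul_ne_zero hb t),
    div_mul_div_comm, mul_div_assoc']
  congr 1
  ring

lemma hasDerivAt_kernel (hw : 0 < w.im) (t : ℝ) :
    HasDerivAt (fun w => kernel w t) (-kernel w t ^ 2) w := by
  have h : HasDerivAt (fun w : ℂ => (t : ℂ) * (1 + w * t)⁻¹)
      (t * (-(1 * t) / (1 + w * t) ^ 2)) w :=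
    ((((hasDerivAt_id w).mul_const _).const_add 1).inv (one_add_mul_ne_zero hw t)).const_mul _
  convert h using 1
  · ext; rw [kernel, div_eq_mul_inv]
  · rw [kernel, div_pow]; ring

lemma im_neg_kernel (w : ℂ) (t : ℝ) : (-kernel w t).im = w.im * ‖kernel w t‖ ^ 2 := by
  rw [kernel, neg_im, div_im, ← normSq_eq_norm_sq, normSq_div, normSq_ofReal]
  simp only [add_re, add_im, mul_re, mul_im, one_re, one_im, ofReal_re, ofReal_im]
  field_simp
  ring

lemma im_neg_conj_mul_kernel (z : ℂ) (hw : 0 < w.im) (t : ℝ) :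
    (-(conj z * kernel w t)).im
      = z.im * (t / normSq (1 + w * t)) + (z * w).im * ‖kernel w t‖ ^ 2 := by
  have h := normSq_pos.2 (one_add_mul_ne_zero hw t)
  rw [kernel, ← normSq_eq_norm_sq, normSq_div, normSq_ofReal, neg_im, mul_im, conj_re, conj_im,
    div_re, div_im]
  simp only [add_re, add_im, mul_re, mul_im, one_re, one_im, ofReal_re, ofReal_im]
  field_simp
  ring

lemma div_normSq_one_add_mul (w : ℂ) (t : ℝ) :
    t / normSq (1 + w * t) = (kernel w t).re - w.re * ‖kernel w t‖ ^ 2 := by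
  rw [kernel, ← normSq_eq_norm_sq, normSq_div, normSq_ofReal, div_re]
  simp only [add_re, add_im, mul_re, mul_im, one_re, one_im, ofReal_re, ofReal_im]
  field_simp
  ring

end Kernel

section Transform

variable (μ : Measure ℝ)

def transform (w : ℂ) : ℂ := ∫ t, kernel w t ∂μ

def coupling (a b : ℂ) : ℂ := ∫ t, kernel a t * kernel b t ∂μ

def energy (w : ℂ) : ℝ := ∫ t, ‖kernel w t‖ ^ 2 ∂μ

variable {μ}

lemma energy_nonneg (w : ℂ) : 0 ≤ energy μ w := integral_nonneg fun _ => by positivity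

lemma integral_div_neg_mul (z w : ℂ) :
    ∫ t, (t : ℂ) / (-z * (1 + w * t)) ∂μ = -z⁻¹ * transform μ w := by
  rw [transform, ← integral_const_mul]
  congr 1 with t
  simp only [kernel, div_eq_mul_inv, mul_inv, inv_neg]
  ring

variable [IsFiniteMeasure μ] {w : ℂ}

lemma integrable_kernel (hw : 0 < w.im) : Integrable (kernel w) μ :=
  .of_bound (continuous_kernel hw).aestronglyMeasurable _ (ae_of_all _ (norm_kernel_le hw))

lemma memLp_kernel (hw : 0 < w.im) (p : ENNReal) : MemLp (kernel w) p μ :=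
  .of_bound (continuous_kernel hw).aestronglyMeasurable _ (ae_of_all _ (norm_kernel_le hw))

lemma integrable_norm_kernel_sq (hw : 0 < w.im) : Integrable (fun t => ‖kernel w t‖ ^ 2) μ :=
  (memLp_kernel hw (2 : ℕ)).integrable_norm_pow'

lemma integrable_div_normSq_one_add_mul (hw : 0 < w.im) :
    Integrable (fun t : ℝ => t / normSq (1 + w * t)) μ := by
  simp only [div_normSq_one_add_mul]
  exact (integrable_kernel hw).re.sub ((integrable_norm_kernel_sq hw).const_mul _)

lemma transform_sub_transform {a b : ℂ} (ha : 0 < a.im) (hb : 0 < b.im) :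
    transform μ a - transform μ b = -(a - b) * coupling μ a b := by
  rw [transform, transform, coupling, ← integral_sub (integrable_kernel ha) (integrable_kernel hb),
    ← integral_const_mul]
  exact integral_congr_ae (ae_of_all _ (kernel_sub_kernel ha hb))

lemma hasDerivAt_transform (hw : 0 < w.im) : HasDerivAt (transform μ) (-coupling μ w w) w := by
  have hball : Metric.ball w (w.im / 2) ∈ 𝓝 w := Metric.ball_mem_nhds w (by linarith)
  have him {v} (hv : v ∈ Metric.ball w (w.im / 2)) : 0 < v.im :=
    (half_pos hw).trans (half_im_lt_im_of_mem_ball hv)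
  have hderiv := hasDerivAt_integral_of_dominated_loc_of_deriv_le (μ := μ)
    (F' := fun v t => -kernel v t ^ 2) (bound := fun _ => (w.im / 2)⁻¹ ^ 2) hball
    (eventually_of_mem hball fun v hv => (continuous_kernel (him hv)).aestronglyMeasurable)
    (integrable_kernel hw) ((continuous_kernel hw).pow 2).neg.aestronglyMeasurable
    (ae_of_all _ fun t v hv => by
      rw [norm_neg, norm_pow]
      gcongr
      exact (norm_kernel_le (him hv) t).trans
        (inv_anti₀ (half_pos hw) (half_im_lt_im_of_mem_ball hv).le))
    (integrable_const _) (ae_of_all _ fun t v hv => hasDerivAt_kernel (him hv) t)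
  show HasDerivAt (fun v => ∫ t, kernel v t ∂μ) _ w
  simpa only [coupling, integral_neg, sq] using hderiv.2

lemma hasStrictDerivAt_transform (hw : 0 < w.im) :
    HasStrictDerivAt (transform μ) (-coupling μ w w) w := by
  have hdiff : DifferentiableOn ℂ (transform μ) UpperHalf := fun v hv =>
    (hasDerivAt_transform hv).differentiableAt.differentiableWithinAt
  rw [← (hasDerivAt_transform hw).deriv]
  exact (hdiff.analyticAt (isOpen_upperHalf.mem_nhds hw)).hasStrictDerivAt

lemma im_neg_transform (hw : 0 < w.im) : (-transform μ w).im = w.im * energy μ w := by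
  rw [transform, energy, ← integral_neg, ← integral_const_mul]
  refine (integral_im (𝕜 := ℂ) (integrable_kernel hw).neg).symm.trans ?_
  exact integral_congr_ae (ae_of_all _ (im_neg_kernel w))

lemma im_neg_conj_mul_transform (z : ℂ) (hw : 0 < w.im) :
    (-(conj z * transform μ w)).im
      = z.im * ∫ t, t / normSq (1 + w * t) ∂μ + (z * w).im * energy μ w := by
  rw [transform, ← integral_const_mul, ← integral_neg, energy, ← integral_const_mul,
    ← integral_const_mul, ← integral_add ((integrable_div_normSq_one_add_mul hw).const_mul _)
      ((integrable_norm_kernel_sq hw).const_mul _)]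
  refine (integral_im (𝕜 := ℂ) ((integrable_kernel hw).const_mul _).neg).symm.trans ?_
  exact integral_congr_ae (ae_of_all _ (im_neg_conj_mul_kernel z hw))

lemma sq_norm_coupling_le {a b : ℂ} (ha : 0 < a.im) (hb : 0 < b.im) :
    ‖coupling μ a b‖ ^ 2 ≤ energy μ a * energy μ b := by
  calc ‖coupling μ a b‖ ^ 2 ≤ (∫ t, ‖kernel a t‖ * ‖kernel b t‖ ∂μ) ^ 2 := by
        gcongr
        simpa only [coupling, norm_mul] using
          norm_integral_le_integral_norm (fun t => kernel a t * kernel b t)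
    _ ≤ energy μ a * energy μ b :=
        sq_integral_norm_mul_norm_le (memLp_kernel ha 2) (memLp_kernel hb 2)

lemma integral_div_normSq_pos (hμ : ∀ᵐ t ∂μ, 0 ≤ t) (hw : 0 < w.im) (h : transform μ w ≠ 0) :
    0 < ∫ t, t / normSq (1 + w * t) ∂μ := by
  have hnonneg : 0 ≤ᵐ[μ] fun t : ℝ => t / normSq (1 + w * t) :=
    hμ.mono fun t ht => div_nonneg ht (normSq_nonneg _)
  refine (integral_nonneg_of_ae hnonneg).lt_of_ne fun h0 => h ?_
  have hzero := (integral_eq_zero_iff_of_nonneg_ae hnonneg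
    (integrable_div_normSq_one_add_mul hw)).1 h0.symm
  refine integral_eq_zero_of_ae (hzero.mono fun t ht => ?_)
  have ht0 : t = 0 := by
    simpa [(normSq_pos.2 (one_add_mul_ne_zero hw t)).ne'] using ht
  simp [kernel, ht0]

end Transform

section Master

variable (ν νt : Measure ℝ) (c : ℝ)

def masterMap (p : ℂ × ℂ × ℂ) : ℂ × ℂ :=
  (p.1 * p.2.1 + c * transform ν p.2.2, p.1 * p.2.2 + transform νt p.2.1)

lemma isPair_iff {z d dt : ℂ} (hz : z ≠ 0) :
    IsPair ν νt c z d dt ↔ d ∈ UpperHalf ∧ dt ∈ UpperHalf ∧ masterMap ν νt c (z, d, dt) = 0 := by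
  have h (a x G : ℂ) : x = a * (-z⁻¹ * G) ↔ z * x + a * G = 0 := by
    constructor <;> intro hx
    · rw [hx]; field_simp; ring
    · field_simp; linear_combination hx
  have h' (x G : ℂ) : x = -z⁻¹ * G ↔ z * x + G = 0 := by simpa using h 1 x G
  simp only [IsPair, integral_div_neg_mul, masterMap, Prod.mk_eq_zero, h, h']

variable {ν νt c} [IsFiniteMeasure ν] [IsFiniteMeasure νt] {z d dt : ℂ}

lemma mul_energy_lt_normSq (hν : ∀ᵐ t ∂ν, 0 ≤ t) (hc : 0 < c) (hz : 0 < z.im)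
    (hd : 0 < d.im) (hdt : 0 < dt.im) (h : masterMap ν νt c (z, d, dt) = 0) :
    c * (energy ν dt * energy νt d) < normSq z := by
  obtain ⟨h1, h2⟩ := Prod.mk_eq_zero.1 h
  have hzd : z * d = -(c * transform ν dt) := eq_neg_of_add_eq_zero_left h1
  have hzdt : (z * dt).im = d.im * energy νt d := by
    rw [eq_neg_of_add_eq_zero_left h2, im_neg_transform hd]
  have hG : transform ν dt ≠ 0 := fun h0 => by
    rw [h0, mul_zero, neg_zero, mul_eq_zero] at hzd
    rcases hzd with rfl | rfl <;> simp at hz hd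
  have hJ := integral_div_normSq_pos hν hdt hG
  have him : normSq z * d.im
      = c * (z.im * ∫ t, t / normSq (1 + dt * t) ∂ν + d.im * energy νt d * energy ν dt) := by
    have : (normSq z : ℂ) * d = c * -(conj z * transform ν dt) := by
      rw [normSq_eq_conj_mul_self, mul_assoc, hzd]; ring
    rw [← im_ofReal_mul, this, im_ofReal_mul, im_neg_conj_mul_transform z hdt, hzdt]
  -- `him` says `d.im * (normSq z - c E_ν(dt) E_νt(d)) = c z.im J` with `J > 0`
  nlinarith [mul_pos (mul_pos hc hz) hJ]

lemma norm_mul_coupling_lt (hν : ∀ᵐ t ∂ν, 0 ≤ t) (hc : 0 < c) (hz : 0 < z.im)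
    {d' dt' : ℂ} (hd : 0 < d.im) (hdt : 0 < dt.im) (hd' : 0 < d'.im) (hdt' : 0 < dt'.im)
    (h : masterMap ν νt c (z, d, dt) = 0) (h' : masterMap ν νt c (z, d', dt') = 0) :
    ‖c * coupling ν dt dt' * coupling νt d d'‖ < ‖z‖ ^ 2 := by
  have hk := mul_energy_lt_normSq hν hc hz hd hdt h
  have hk' := mul_energy_lt_normSq hν hc hz hd' hdt' h'
  rw [normSq_eq_norm_sq] at hk hk'
  have hE := energy_nonneg (μ := ν) dt
  have hE' := energy_nonneg (μ := ν) dt'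
  have hEt := energy_nonneg (μ := νt) d
  have hEt' := energy_nonneg (μ := νt) d'
  refine lt_of_pow_lt_pow_left₀ 2 (by positivity) ?_
  calc ‖c * coupling ν dt dt' * coupling νt d d'‖ ^ 2
      = c ^ 2 * (‖coupling ν dt dt'‖ ^ 2 * ‖coupling νt d d'‖ ^ 2) := by
        rw [norm_mul, norm_mul, norm_real, Real.norm_of_nonneg hc.le]; ring
    _ ≤ c ^ 2 * ((energy ν dt * energy ν dt') * (energy νt d * energy νt d')) := by
        have := mul_nonneg hE hE'
        gcongr
        · exact sq_norm_coupling_le hdt hdt'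
        · exact sq_norm_coupling_le hd hd'
    _ = (c * (energy ν dt * energy νt d)) * (c * (energy ν dt' * energy νt d')) := by ring
    _ < ‖z‖ ^ 2 * ‖z‖ ^ 2 := by
        have := mul_nonneg hc.le (mul_nonneg hE hEt)
        have := mul_nonneg hc.le (mul_nonneg hE' hEt')
        gcongr
    _ = (‖z‖ ^ 2) ^ 2 := by ring

lemma eq_of_masterMap_eq_zero (hν : ∀ᵐ t ∂ν, 0 ≤ t) (hc : 0 < c) (hz : 0 < z.im)
    {d' dt' : ℂ} (hd : 0 < d.im) (hdt : 0 < dt.im) (hd' : 0 < d'.im) (hdt' : 0 < dt'.im)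
    (h : masterMap ν νt c (z, d, dt) = 0) (h' : masterMap ν νt c (z, d', dt') = 0) :
    d = d' ∧ dt = dt' := by
  obtain ⟨h1, h2⟩ := Prod.mk_eq_zero.1 h
  obtain ⟨h1', h2'⟩ := Prod.mk_eq_zero.1 h'
  have hG := transform_sub_transform (μ := ν) hdt hdt'
  have hGt := transform_sub_transform (μ := νt) hd hd'
  obtain ⟨hx, hy⟩ := eq_zero_of_mul_eq_of_norm_lt
    (norm_mul_coupling_lt hν hc hz hd hdt hd' hdt' h h')
    (by linear_combination h1 - h1' - c * hG : z * (d - d') = c * coupling ν dt dt' * (dt - dt'))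
    (by linear_combination h2 - h2' - hGt : z * (dt - dt') = coupling νt d d' * (d - d'))
  exact ⟨sub_eq_zero.1 hx, sub_eq_zero.1 hy⟩

lemma hasStrictFDerivAt_masterMap (hd : 0 < d.im) (hdt : 0 < dt.im) :
    ∃ f' : ℂ × ℂ × ℂ →L[ℂ] ℂ × ℂ, HasStrictFDerivAt (masterMap ν νt c) f' (z, d, dt) ∧
      ∀ v : ℂ × ℂ, f' (0, v) =
        (z * v.1 - c * coupling ν dt dt * v.2, z * v.2 - coupling νt d d * v.1) := by
  have hsnd := hasStrictFDerivAt_snd (𝕜 := ℂ) (p := (z, d, dt))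
  have h1 := (hasStrictFDerivAt_fst.mul hsnd.fst).add
    (((hasStrictDerivAt_transform (μ := ν) hdt).comp_hasStrictFDerivAt _ hsnd.snd).const_mul
      (c : ℂ))
  have h2 := (hasStrictFDerivAt_fst.mul hsnd.snd).add
    ((hasStrictDerivAt_transform (μ := νt) hd).comp_hasStrictFDerivAt _ hsnd.fst)
  refine ⟨_, h1.prodMk h2, fun v => ?_⟩
  simp [sub_eq_add_neg, mul_assoc]

lemma isInvertible_comp_inr (hν : ∀ᵐ t ∂ν, 0 ≤ t) (hc : 0 < c) (hz : 0 < z.im)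
    (hd : 0 < d.im) (hdt : 0 < dt.im) (h : masterMap ν νt c (z, d, dt) = 0)
    {f' : ℂ × ℂ × ℂ →L[ℂ] ℂ × ℂ} (hf' : ∀ v : ℂ × ℂ, f' (0, v) =
      (z * v.1 - c * coupling ν dt dt * v.2, z * v.2 - coupling νt d d * v.1)) :
    (f' ∘L .inr ℂ ℂ (ℂ × ℂ)).IsInvertible := by
  refine ContinuousLinearMap.isInvertible_of_injective
    ((injective_iff_map_eq_zero _).2 fun v hv => ?_)
  rw [ContinuousLinearMap.comp_apply, ContinuousLinearMap.inr_apply, hf', Prod.mk_eq_zero,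
    sub_eq_zero, sub_eq_zero] at hv
  obtain ⟨h1, h2⟩ := eq_zero_of_mul_eq_of_norm_lt
    (norm_mul_coupling_lt hν hc hz hd hdt hd hdt h h) hv.1 hv.2
  exact Prod.ext h1 h2

lemma differentiableAt_of_isPair (hν : ∀ᵐ t ∂ν, 0 ≤ t) (hc : 0 < c) {δ δt : ℂ → ℂ}
    (hsol : ∀ z ∈ UpperHalf, IsPair ν νt c z (δ z) (δt z)) {z₀ : ℂ} (hz₀ : z₀ ∈ UpperHalf) :
    DifferentiableAt ℂ (fun z => (δ z, δt z)) z₀ := by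
  obtain ⟨hd₀, hdt₀, h₀⟩ := (isPair_iff ν νt c (ne_zero_of_mem_upperHalf hz₀)).1 (hsol z₀ hz₀)
  obtain ⟨f', hF, hf'⟩ := hasStrictFDerivAt_masterMap (ν := ν) (νt := νt) (c := c) hd₀ hdt₀
  have hinv := isInvertible_comp_inr hν hc hz₀ hd₀ hdt₀ h₀ hf'
  set ψ := hF.implicitFunctionOfProdDomain hinv
  have hψ : ∀ᶠ z in 𝓝 z₀, (δ z, δt z) = ψ z := by
    filter_upwards [hF.eventually_apply_implicitFunctionOfProdDomain hinv,
      hF.tendsto_implicitFunctionOfProdDomain hinv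
        ((isOpen_upperHalf.prod isOpen_upperHalf).mem_nhds ⟨hd₀, hdt₀⟩),
      isOpen_upperHalf.mem_nhds hz₀] with z hzψ hψ hz
    obtain ⟨hd, hdt, h⟩ := (isPair_iff ν νt c (ne_zero_of_mem_upperHalf hz)).1 (hsol z hz)
    rw [h₀] at hzψ
    obtain ⟨e1, e2⟩ := eq_of_masterMap_eq_zero hν hc hz hd hdt hψ.1 hψ.2 h hzψ
    exact Prod.ext e1 e2
  exact (hF.hasStrictFDerivAt_implicitFunctionOfProdDomain hinv).differentiableAt
    |>.congr_of_eventuallyEq hψ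

end Master

end MasterSystem

theorem stmt2_general (ν νt : Measure ℝ) [IsProbabilityMeasure ν] [IsProbabilityMeasure νt]
    (hνpos : ν (Set.Iio (0 : ℝ)) = 0)
    (c : ℝ) (hc : 0 < c)
    (δ δt : ℂ → ℂ) (hsol : ∀ z ∈ UpperHalf, IsPair ν νt c z (δ z) (δt z)) :
    DifferentiableOn ℂ δ UpperHalf ∧ DifferentiableOn ℂ δt UpperHalf := by
  have hν : ∀ᵐ t ∂ν, 0 ≤ t :=
    (measure_eq_zero_iff_ae_notMem.1 hνpos).mono fun _ h => not_lt.1 h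
  have h z (hz : z ∈ UpperHalf) := MasterSystem.differentiableAt_of_isPair hν hc hsol hz
  exact ⟨fun z hz => (h z hz).fst.differentiableWithinAt,
    fun z hz => (h z hz).snd.differentiableWithinAt⟩

theorem stmt2 (ν νt : Measure ℝ) [IsProbabilityMeasure ν] [IsProbabilityMeasure νt]
    (hνpos : ν (Set.Iio (0 : ℝ)) = 0) (hνtpos : νt (Set.Iio (0 : ℝ)) = 0)
    (hν0 : ν ≠ Measure.dirac 0) (hνt0 : νt ≠ Measure.dirac 0)
    (c : ℝ) (hc : 0 < c)
    (δ δt : ℂ → ℂ) (hsol : ∀ z ∈ UpperHalf, IsPair ν νt c z (δ z) (δt z)) :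
    DifferentiableOn ℂ δ UpperHalf ∧ DifferentiableOn ℂ δt UpperHalf :=
  stmt2_general ν νt hνpos c hc δ δt hsol
end
end

section
/- For ℓ = 1, 2 and for every bounded set R ⊆ ℂ₊ with inf_{z ∈ R} |Re z| > 0 (i.e. R lies at a positive distance from the imaginary axis), one has sup_{z ∈ R} ∫ t^ℓ/|1+δ̃(z)t|² dν(t) < ∞ and sup_{z ∈ R} ∫ t^ℓ/|1+δ(z)t|² dν̃(t) < ∞. -/
open MeasureTheory Set Filter Topology

noncomputable section

/-!
Write `u = ∫ t² / |1 + δ̃ t|² dν` and `v = ∫ t² / |1 + δ t|² dν̃`. Multiplying the equations by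
`z` and taking imaginary parts gives `Im (z δ) = c Im δ̃ · u` and `Im (z δ̃) = Im δ · v`;
inserting these into `|z|² δ̃ = conj z · (z δ̃)` yields
`Im δ̃ (|z|² - c u v) = Im z ∫ t / |1 + δ t|² dν̃ ≥ 0`, so `c u v ≤ |z|²` is bounded on `R`.

If `u` were large, `v` would be small, and by Cauchy–Schwarz `|z δ̃| ≤ √v`, so `δ̃` would be
small. Splitting `ν` at a large `A`, `|z δ| ≤ c |∫ t / (1 + δ̃ t) dν| ≤ 2 c A + c √(u ν(|t| > A))`,
which is `o(√u)`. On the other hand `ν̃ ≠ δ₀` gives `τ > 0` with `p = ν̃(|t| ≥ τ) > 0`, and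
`v ≥ p τ² / (1 + |δ| τ)²` together with `u v ≲ 1` forces `|δ| ≳ √u`. As `|z|` is bounded below
on `R`, these are incompatible for large `u`. Exchanging the roles of `ν` and `ν̃` bounds `v`,
and the case `ℓ = 1` follows from `1 ≤ 2 |1 + δ̃ t|² + 2 |δ̃|² t²` and the bound on `|δ̃|`.
-/

lemma one_add_mul_ofReal_ne_zero {e : ℂ} (he : 0 < e.im) (t : ℝ) : 1 + e * t ≠ 0 := by
  intro h
  have him := congrArg Complex.im h
  simp only [Complex.add_im, Complex.one_im, Complex.mul_im, Complex.ofReal_re,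
    Complex.ofReal_im, mul_zero, zero_add, Complex.zero_im] at him
  rcases mul_eq_zero.1 him with h' | rfl
  · exact he.ne' h'
  · simp at h

lemma abs_mul_im_le_norm_one_add_mul (e : ℂ) (t : ℝ) : |t| * e.im ≤ ‖1 + e * t‖ := by
  calc |t| * e.im ≤ |(1 + e * t).im| := by
        simp only [Complex.add_im, Complex.one_im, Complex.mul_im, Complex.ofReal_re,
          Complex.ofReal_im, mul_zero, zero_add, abs_mul]
        nlinarith [le_abs_self e.im, abs_nonneg t]
    _ ≤ ‖1 + e * t‖ := Complex.abs_im_le_norm _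

lemma one_sub_norm_mul_abs_le_norm_one_add_mul (e : ℂ) (t : ℝ) :
    1 - ‖e‖ * |t| ≤ ‖1 + e * t‖ := by
  simpa [norm_mul] using norm_sub_norm_le (1 : ℂ) (-(e * t))

lemma norm_one_add_mul_le (e : ℂ) (t : ℝ) : ‖1 + e * t‖ ≤ 1 + ‖e‖ * |t| := by
  simpa [norm_mul] using norm_add_le (1 : ℂ) (e * t)

lemma one_div_norm_sq_le {e : ℂ} (he : 0 < e.im) (t : ℝ) :
    1 / ‖1 + e * t‖ ^ 2 ≤ 2 + 2 * ‖e‖ ^ 2 * (t ^ 2 / ‖1 + e * t‖ ^ 2) := by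
  have hpos : 0 < ‖1 + e * t‖ := norm_pos_iff.2 (one_add_mul_ofReal_ne_zero he t)
  have h := one_sub_norm_mul_abs_le_norm_one_add_mul e t
  rw [div_le_iff₀ (by positivity), add_mul, mul_assoc, div_mul_cancel₀ _ (by positivity)]
  nlinarith [sq_abs t, norm_nonneg e, abs_nonneg t, sq_nonneg (‖1 + e * t‖ - ‖e‖ * |t|)]

lemma abs_div_norm_sq_le {e : ℂ} (he : 0 < e.im) (t : ℝ) :
    |t| / ‖1 + e * t‖ ^ 2 ≤ 1 + (1 / 2 + ‖e‖ ^ 2) * (t ^ 2 / ‖1 + e * t‖ ^ 2) := by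
  have h := one_div_norm_sq_le he t
  have hamgm : |t| ≤ (t ^ 2 + 1) / 2 := by nlinarith [sq_abs t, sq_nonneg (|t| - 1)]
  calc |t| / ‖1 + e * t‖ ^ 2 ≤ (t ^ 2 + 1) / 2 / ‖1 + e * t‖ ^ 2 := by gcongr
    _ = t ^ 2 / ‖1 + e * t‖ ^ 2 / 2 + 1 / ‖1 + e * t‖ ^ 2 / 2 := by ring
    _ ≤ _ := by linarith

lemma div_sq_le_sq_div_norm_sq {e : ℂ} (he : 0 < e.im) {τ t : ℝ} (hτ : 0 ≤ τ) (ht : τ ≤ |t|) :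
    (τ / (1 + ‖e‖ * τ)) ^ 2 ≤ t ^ 2 / ‖1 + e * t‖ ^ 2 := by
  have hpos : 0 < ‖1 + e * t‖ := norm_pos_iff.2 (one_add_mul_ofReal_ne_zero he t)
  rw [← sq_abs t, ← div_pow]
  refine pow_le_pow_left₀ (by positivity) ?_ 2
  rw [div_le_div_iff₀ (by positivity) hpos]
  nlinarith [norm_one_add_mul_le e t, norm_nonneg e]

lemma norm_div_one_add_mul_le {e : ℂ} (he : 0 < e.im) (t : ℝ) :
    ‖(t : ℂ) / (1 + e * t)‖ ≤ e.im⁻¹ := by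
  have hpos : 0 < ‖1 + e * t‖ := norm_pos_iff.2 (one_add_mul_ofReal_ne_zero he t)
  rw [norm_div, Complex.norm_real, Real.norm_eq_abs, div_le_iff₀ hpos, inv_mul_eq_div,
    le_div_iff₀ he]
  exact abs_mul_im_le_norm_one_add_mul e t

lemma norm_div_one_add_mul_le_two_mul {e : ℂ} {A t : ℝ} (heA : ‖e‖ * A ≤ 1 / 2)
    (ht : |t| ≤ A) : ‖(t : ℂ) / (1 + e * t)‖ ≤ 2 * A := by
  have hden : 1 / 2 ≤ ‖1 + e * t‖ := by
    nlinarith [one_sub_norm_mul_abs_le_norm_one_add_mul e t,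
      mul_le_mul_of_nonneg_left ht (norm_nonneg e)]
  rw [norm_div, Complex.norm_real, Real.norm_eq_abs, div_le_iff₀ (by linarith)]
  nlinarith [abs_nonneg t]

lemma sq_div_norm_sq_eq (e : ℂ) (t : ℝ) :
    t ^ 2 / ‖1 + e * t‖ ^ 2 = ‖(t : ℂ) / (1 + e * t)‖ ^ 2 := by
  rw [norm_div, Complex.norm_real, Real.norm_eq_abs, div_pow, sq_abs]

lemma div_one_add_mul_im (e : ℂ) (t : ℝ) :
    ((t : ℂ) / (1 + e * t)).im = -e.im * (t ^ 2 / ‖1 + e * t‖ ^ 2) := by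
  rw [Complex.div_im, ← Complex.normSq_eq_norm_sq]
  simp only [Complex.ofReal_im, Complex.add_re, Complex.one_re, Complex.mul_re,
    Complex.ofReal_re, mul_zero, sub_zero, zero_mul, zero_div, Complex.add_im, Complex.one_im,
    Complex.mul_im, zero_add, zero_sub]
  ring

lemma div_one_add_mul_re (e : ℂ) (t : ℝ) :
    ((t : ℂ) / (1 + e * t)).re = t / ‖1 + e * t‖ ^ 2 + e.re * (t ^ 2 / ‖1 + e * t‖ ^ 2) := by
  rw [Complex.div_re, ← Complex.normSq_eq_norm_sq]
  simp only [Complex.ofReal_re, Complex.add_re, Complex.one_re, Complex.mul_re,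
    Complex.ofReal_im, mul_zero, sub_zero, Complex.add_im, Complex.one_im, Complex.mul_im,
    zero_add, zero_mul, zero_div, add_zero]
  ring

lemma integral_le_sqrt_measureReal_mul_integral_sq {α : Type*} [MeasurableSpace α]
    {μ : Measure α} [IsFiniteMeasure μ] {f : α → ℝ} (hf : MemLp f 2 μ) :
    ∫ a, f a ∂μ ≤ √(μ.real univ * ∫ a, f a ^ 2 ∂μ) := by
  have hf1 : Integrable f μ := hf.integrable one_le_two
  have hf2 : Integrable (fun a => f a ^ 2) μ := hf.integrable_sq
  -- the quadratic `x ↦ ∫ (x f - 1)²` is nonnegative, so its discriminant is nonpositive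
  have hquad : ∀ x : ℝ, 0 ≤ (∫ a, f a ^ 2 ∂μ) * (x * x) + (-2 * ∫ a, f a ∂μ) * x
      + μ.real univ := by
    intro x
    have hexpand : ∫ a, (x * f a - 1) ^ 2 ∂μ
        = (∫ a, f a ^ 2 ∂μ) * (x * x) + (-2 * ∫ a, f a ∂μ) * x + μ.real univ := by
      have : (fun a => (x * f a - 1) ^ 2) = fun a => (x ^ 2 * f a ^ 2 - 2 * x * f a) + 1 := by
        ext a; ring
      have hsq : Integrable (fun a => x ^ 2 * f a ^ 2) μ := hf2.const_mul _
      have hlin : Integrable (fun a => 2 * x * f a) μ := hf1.const_mul _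
      have hdiff : Integrable (fun a => x ^ 2 * f a ^ 2 - 2 * x * f a) μ := hsq.sub hlin
      rw [this, integral_add hdiff (integrable_const _), integral_sub hsq hlin,
        integral_const_mul, integral_const_mul, integral_const, smul_eq_mul, mul_one]
      ring
    rw [← hexpand]
    exact integral_nonneg fun a => sq_nonneg _
  have hdisc := discrim_le_zero hquad
  rw [discrim] at hdisc
  exact (le_abs_self _).trans (Real.abs_le_sqrt (by nlinarith))

section Measures
variable {μ : Measure ℝ}

lemma exists_measure_abs_ge_pos [IsProbabilityMeasure μ] (hμ : μ ≠ Measure.dirac 0) :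
    ∃ τ > 0, 0 < μ {t | τ ≤ |t|} := by
  by_contra! h
  apply hμ
  have hnull : μ {0}ᶜ = 0 := by
    refine measure_mono_null (fun t (ht : t ≠ 0) => ?_)
      (measure_iUnion_null fun n : ℕ => nonpos_iff_eq_zero.1 (h (1 / (n + 1)) (by positivity)))
    obtain ⟨n, hn⟩ := exists_nat_one_div_lt (abs_pos.2 ht)
    exact mem_iUnion.2 ⟨n, hn.le⟩
  rw [← Measure.restrict_eq_self_of_ae_mem (s := {0}) (mem_ae_iff.2 hnull),
    Measure.restrict_singleton, (prob_compl_eq_zero_iff (measurableSet_singleton 0)).1 hnull,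
    one_smul]

lemma exists_measureReal_abs_gt_le [IsFiniteMeasure μ] {η : ℝ} (hη : 0 < η) :
    ∃ A > 0, μ.real {t | A < |t|} ≤ η := by
  have h := tendsto_measure_norm_gt_of_isTightMeasureSet (isTightMeasureSet_singleton (μ := μ))
  simp only [mem_singleton_iff, iSup_iSup_eq_left, Real.norm_eq_abs] at h
  obtain ⟨A, hApos, hA⟩ := ((eventually_gt_atTop 0).and
    (h.eventually (gt_mem_nhds (ENNReal.ofReal_pos.2 hη)))).exists
  exact ⟨A, hApos, ENNReal.toReal_le_of_le_ofReal hη.le hA.le⟩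

end Measures

def ratioIntegral (μ : Measure ℝ) (e : ℂ) : ℂ := ∫ t, (t : ℂ) / (1 + e * t) ∂μ

def resolventMoment (μ : Measure ℝ) (ℓ : ℕ) (e : ℂ) : ℝ := ∫ t, t ^ ℓ / ‖1 + e * t‖ ^ 2 ∂μ

lemma resolventMoment_two_nonneg (μ : Measure ℝ) (e : ℂ) : 0 ≤ resolventMoment μ 2 e :=
  integral_nonneg fun t => by positivity

lemma resolventMoment_one_nonneg {μ : Measure ℝ} (hμ : μ (Iio 0) = 0) (e : ℂ) :
    0 ≤ resolventMoment μ 1 e := by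
  refine integral_nonneg_of_ae ?_
  filter_upwards [measure_eq_zero_iff_ae_notMem.1 hμ] with t ht
  have : 0 ≤ t := not_lt.1 ht
  positivity

section Integrals

variable {μ : Measure ℝ} [IsFiniteMeasure μ] {e : ℂ}

lemma integrable_div_one_add_mul (he : 0 < e.im) :
    Integrable (fun t : ℝ => (t : ℂ) / (1 + e * t)) μ :=
  .of_bound (Measurable.aestronglyMeasurable (by fun_prop)) _
    (.of_forall (norm_div_one_add_mul_le he))

lemma integrable_sq_div_norm_sq (he : 0 < e.im) :
    Integrable (fun t : ℝ => t ^ 2 / ‖1 + e * t‖ ^ 2) μ := by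
  refine .of_bound (Measurable.aestronglyMeasurable (by fun_prop)) (e.im⁻¹ ^ 2)
    (.of_forall fun t => ?_)
  rw [Real.norm_of_nonneg (by positivity), sq_div_norm_sq_eq]
  exact pow_le_pow_left₀ (norm_nonneg _) (norm_div_one_add_mul_le he t) 2

lemma integrable_one_add_mul_sq_div_norm_sq (he : 0 < e.im) (a : ℝ) :
    Integrable (fun t : ℝ => 1 + a * (t ^ 2 / ‖1 + e * t‖ ^ 2)) μ :=
  (integrable_const 1).add ((integrable_sq_div_norm_sq he).const_mul a)

lemma integrable_div_norm_sq (he : 0 < e.im) :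
    Integrable (fun t : ℝ => t / ‖1 + e * t‖ ^ 2) μ := by
  refine (integrable_one_add_mul_sq_div_norm_sq he (1 / 2 + ‖e‖ ^ 2)).mono'
    (Measurable.aestronglyMeasurable (by fun_prop)) (.of_forall fun t => ?_)
  rw [Real.norm_eq_abs, abs_div, abs_of_nonneg (sq_nonneg ‖1 + e * t‖)]
  exact abs_div_norm_sq_le he t

lemma ratioIntegral_im (he : 0 < e.im) :
    (ratioIntegral μ e).im = -e.im * resolventMoment μ 2 e := by
  rw [ratioIntegral, resolventMoment, ← integral_const_mul]
  simpa only [RCLike.im_to_complex, div_one_add_mul_im] using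
    (integral_im (integrable_div_one_add_mul (μ := μ) he)).symm

lemma ratioIntegral_re (he : 0 < e.im) :
    (ratioIntegral μ e).re = resolventMoment μ 1 e + e.re * resolventMoment μ 2 e := by
  rw [ratioIntegral, resolventMoment, resolventMoment, ← integral_const_mul,
    ← integral_add (by simpa using integrable_div_norm_sq he)
      ((integrable_sq_div_norm_sq he).const_mul _)]
  simpa only [RCLike.re_to_complex, div_one_add_mul_re, pow_one] using
    (integral_re (integrable_div_one_add_mul (μ := μ) he)).symm

lemma measureReal_mul_sq_le_resolventMoment (he : 0 < e.im) {τ : ℝ} (hτ : 0 ≤ τ) :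
    μ.real {t | τ ≤ |t|} * (τ / (1 + ‖e‖ * τ)) ^ 2 ≤ resolventMoment μ 2 e := by
  have hS : MeasurableSet {t : ℝ | τ ≤ |t|} := measurableSet_le measurable_const measurable_abs
  calc μ.real {t | τ ≤ |t|} * (τ / (1 + ‖e‖ * τ)) ^ 2
      = ∫ _ in {t | τ ≤ |t|}, (τ / (1 + ‖e‖ * τ)) ^ 2 ∂μ := by
        rw [setIntegral_const, smul_eq_mul]
    _ ≤ ∫ t in {t | τ ≤ |t|}, t ^ 2 / ‖1 + e * t‖ ^ 2 ∂μ :=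
        setIntegral_mono_on (integrableOn_const (measure_lt_top _ _).ne)
          (integrable_sq_div_norm_sq he).integrableOn hS
          fun t ht => div_sq_le_sq_div_norm_sq he hτ ht
    _ ≤ resolventMoment μ 2 e :=
        setIntegral_le_integral (integrable_sq_div_norm_sq he) (.of_forall fun t => by positivity)

end Integrals

section ProbabilityIntegrals

variable {μ : Measure ℝ} [IsProbabilityMeasure μ] {e : ℂ}

lemma resolventMoment_one_le (he : 0 < e.im) :
    resolventMoment μ 1 e ≤ 1 + (1 / 2 + ‖e‖ ^ 2) * resolventMoment μ 2 e := by
  rw [resolventMoment, resolventMoment, ← integral_const_mul]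
  calc ∫ t, t ^ 1 / ‖1 + e * t‖ ^ 2 ∂μ
      ≤ ∫ t, (1 + (1 / 2 + ‖e‖ ^ 2) * (t ^ 2 / ‖1 + e * t‖ ^ 2)) ∂μ := by
        refine integral_mono (by simpa using integrable_div_norm_sq he)
          (integrable_one_add_mul_sq_div_norm_sq he _) fun t => ?_
        rw [pow_one]
        exact (div_le_div_of_nonneg_right (le_abs_self t) (by positivity)).trans
          (abs_div_norm_sq_le he t)
    _ = 1 + ∫ t, (1 / 2 + ‖e‖ ^ 2) * (t ^ 2 / ‖1 + e * t‖ ^ 2) ∂μ := by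
        rw [integral_add (integrable_const 1) ((integrable_sq_div_norm_sq he).const_mul _),
          integral_const, probReal_univ, one_smul]

/-- Cauchy–Schwarz on the tail `{|t| > A}`; on `{|t| ≤ A}` the integrand is at most `2 A`. -/
lemma norm_ratioIntegral_le (he : 0 < e.im) {A θ : ℝ} (hA : 0 ≤ A) (hθ : 0 ≤ θ)
    (heA : ‖e‖ * A ≤ 1 / 2) (htail : μ.real {t | A < |t|} ≤ θ ^ 2) :
    ‖ratioIntegral μ e‖ ≤ 2 * A + θ * √(resolventMoment μ 2 e) := by
  set S := {t : ℝ | A < |t|}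
  have hS : MeasurableSet S := measurableSet_lt measurable_const measurable_abs
  set f := fun t : ℝ => ‖(t : ℂ) / (1 + e * t)‖
  have hf : Integrable f μ := (integrable_div_one_add_mul he).norm
  have hbulk : ∫ t in Sᶜ, f t ∂μ ≤ 2 * A := by
    refine (Real.le_norm_self _).trans ((norm_setIntegral_le_of_norm_le_const (C := 2 * A)
      (measure_lt_top _ _) fun t ht => ?_).trans ?_)
    · rw [Real.norm_of_nonneg (norm_nonneg _)]
      exact norm_div_one_add_mul_le_two_mul heA (not_lt.1 ht)
    · exact mul_le_of_le_one_right (by linarith) measureReal_le_one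
  have htail_int : ∫ t in S, f t ∂μ ≤ θ * √(resolventMoment μ 2 e) := by
    have hf2 : IntegrableOn (fun t => f t ^ 2) S μ := by
      simpa only [f, ← sq_div_norm_sq_eq] using (integrable_sq_div_norm_sq he).integrableOn
    have hf2_le : ∫ t in S, f t ^ 2 ∂μ ≤ resolventMoment μ 2 e := by
      simp only [f, ← sq_div_norm_sq_eq]
      exact setIntegral_le_integral (integrable_sq_div_norm_sq he)
        (.of_forall fun t => by positivity)
    calc ∫ t in S, f t ∂μ ≤ √(μ.real S * ∫ t in S, f t ^ 2 ∂μ) := by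
          simpa only [measureReal_restrict_apply_univ] using
            integral_le_sqrt_measureReal_mul_integral_sq
              ((memLp_two_iff_integrable_sq hf.1.restrict).2 hf2)
      _ ≤ √(θ ^ 2 * resolventMoment μ 2 e) := Real.sqrt_le_sqrt
          (mul_le_mul htail hf2_le (setIntegral_nonneg hS fun t _ => sq_nonneg _) (sq_nonneg θ))
      _ = θ * √(resolventMoment μ 2 e) := by rw [Real.sqrt_mul (sq_nonneg θ), Real.sqrt_sq hθ]
  calc ‖ratioIntegral μ e‖ ≤ ∫ t, f t ∂μ := norm_integral_le_integral_norm _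
    _ = ∫ t in S, f t ∂μ + ∫ t in Sᶜ, f t ∂μ := (integral_add_compl hS hf).symm
    _ ≤ _ := by linarith

lemma norm_ratioIntegral_le_sqrt (he : 0 < e.im) :
    ‖ratioIntegral μ e‖ ≤ √(resolventMoment μ 2 e) := by
  simpa using norm_ratioIntegral_le he le_rfl zero_le_one (by simp)
    (measureReal_le_one.trans_eq (one_pow 2).symm)

end ProbabilityIntegrals

lemma mul_norm_le_of_mul_eq {μ : Measure ℝ} {c ε : ℝ} {z d e : ℂ} (hc : 0 ≤ c) (hz : ε ≤ ‖z‖)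
    (h : z * d = -c * ratioIntegral μ e) : ε * ‖d‖ ≤ c * ‖ratioIntegral μ e‖ := by
  calc ε * ‖d‖ ≤ ‖z * d‖ := by rw [norm_mul]; gcongr
    _ = c * ‖ratioIntegral μ e‖ := by
      rw [h, norm_mul, norm_neg, Complex.norm_real, Real.norm_of_nonneg hc]

lemma mul_eq_neg_mul_ratioIntegral {μ : Measure ℝ} {c : ℝ} {z d e : ℂ} (hz : z ≠ 0)
    (h : d = c * ∫ t, (t : ℂ) / (-z * (1 + e * t)) ∂μ) : z * d = -c * ratioIntegral μ e := by
  simp_rw [mul_comm (-z), ← div_div, integral_div] at h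
  rw [h, ← ratioIntegral]
  field_simp

/-- The system of `IsPair` multiplied through by `z`, with a constant in front of each integral,
so that it is invariant under exchanging the two sides. -/
structure IsMasterSolution (ν νt : Measure ℝ) (c₁ c₂ : ℝ) (z d e : ℂ) : Prop where
  im_z_pos : 0 < z.im
  im_d_pos : 0 < d.im
  im_e_pos : 0 < e.im
  mul_d : z * d = -c₁ * ratioIntegral ν e
  mul_e : z * e = -c₂ * ratioIntegral νt d

lemma IsPair.isMasterSolution {ν νt : Measure ℝ} {c : ℝ} {z d dt : ℂ} (hz : z ∈ UpperHalf)
    (h : IsPair ν νt c z d dt) : IsMasterSolution ν νt c 1 z d dt := by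
  obtain ⟨hd, hdt, hd_eq, hdt_eq⟩ := h
  have hz0 : z ≠ 0 := fun h0 => (ne_of_gt (show 0 < z.im from hz)) (by simp [h0])
  refine ⟨hz, hd, hdt, mul_eq_neg_mul_ratioIntegral hz0 hd_eq,
    mul_eq_neg_mul_ratioIntegral hz0 ?_⟩
  rwa [Complex.ofReal_one, one_mul]

namespace IsMasterSolution

variable {ν νt : Measure ℝ} {c₁ c₂ : ℝ} {z d e : ℂ}

lemma symm (h : IsMasterSolution ν νt c₁ c₂ z d e) : IsMasterSolution νt ν c₂ c₁ z e d :=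
  ⟨h.im_z_pos, h.im_e_pos, h.im_d_pos, h.mul_e, h.mul_d⟩

lemma mul_resolventMoment_le [IsFiniteMeasure ν] [IsFiniteMeasure νt] (hνt : νt (Iio 0) = 0)
    (hc₂ : 0 ≤ c₂) (h : IsMasterSolution ν νt c₁ c₂ z d e) :
    c₁ * c₂ * resolventMoment ν 2 e * resolventMoment νt 2 d ≤ ‖z‖ ^ 2 := by
  have hzd : (z * d).im = c₁ * e.im * resolventMoment ν 2 e := by
    rw [h.mul_d, neg_mul, Complex.neg_im, Complex.im_ofReal_mul, ratioIntegral_im h.im_e_pos]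
    ring
  have hze_im : (z * e).im = c₂ * d.im * resolventMoment νt 2 d := by
    rw [h.mul_e, neg_mul, Complex.neg_im, Complex.im_ofReal_mul, ratioIntegral_im h.im_d_pos]
    ring
  have hze_re : (z * e).re = -c₂ * (resolventMoment νt 1 d + d.re * resolventMoment νt 2 d) := by
    rw [h.mul_e, neg_mul, Complex.neg_re, Complex.re_ofReal_mul, ratioIntegral_re h.im_d_pos]
    ring
  -- the imaginary part of `‖z‖² e = conj z * (z e)`
  have key : e.im * (‖z‖ ^ 2 - c₁ * c₂ * resolventMoment ν 2 e * resolventMoment νt 2 d)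
      = c₂ * z.im * resolventMoment νt 1 d := by
    rw [Complex.mul_im] at hzd hze_im
    rw [Complex.mul_re] at hze_re
    rw [← Complex.normSq_eq_norm_sq, Complex.normSq_apply]
    linear_combination z.re * hze_im - z.im * hze_re + c₂ * resolventMoment νt 2 d * hzd
  have hrhs : 0 ≤ c₂ * z.im * resolventMoment νt 1 d :=
    mul_nonneg (mul_nonneg hc₂ h.im_z_pos.le) (resolventMoment_one_nonneg hνt d)
  linarith [(mul_nonneg_iff_of_pos_left h.im_e_pos).1 (key ▸ hrhs)]

lemma sqrt_mul_sqrt_le [IsFiniteMeasure ν] [IsFiniteMeasure νt] (hνt : νt (Iio 0) = 0)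
    (hc₁ : 0 < c₁) (hc₂ : 0 < c₂) (h : IsMasterSolution ν νt c₁ c₂ z d e) :
    √(resolventMoment ν 2 e) * √(resolventMoment νt 2 d) ≤ ‖z‖ / √(c₁ * c₂) := by
  rw [le_div_iff₀ (by positivity), ← Real.sqrt_mul (resolventMoment_two_nonneg ν e),
    ← Real.sqrt_mul (mul_nonneg (resolventMoment_two_nonneg ν e)
      (resolventMoment_two_nonneg νt d)), ← Real.sqrt_sq (norm_nonneg z)]
  exact Real.sqrt_le_sqrt ((le_of_eq (by ring)).trans (h.mul_resolventMoment_le hνt hc₂.le))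

lemma mul_norm_e_le [IsProbabilityMeasure νt] {ε : ℝ} (hc₂ : 0 ≤ c₂) (hz : ε ≤ ‖z‖)
    (h : IsMasterSolution ν νt c₁ c₂ z d e) : ε * ‖e‖ ≤ c₂ * √(resolventMoment νt 2 d) :=
  (mul_norm_le_of_mul_eq hc₂ hz h.mul_e).trans
    (mul_le_mul_of_nonneg_left (norm_ratioIntegral_le_sqrt h.im_d_pos) hc₂)

end IsMasterSolution

lemma exists_resolventMoment_two_le {ν νt : Measure ℝ} [IsProbabilityMeasure ν]
    [IsProbabilityMeasure νt] (hνt : νt (Iio 0) = 0) (hνt0 : νt ≠ Measure.dirac 0)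
    {c₁ c₂ ε B : ℝ} (hc₁ : 0 < c₁) (hc₂ : 0 < c₂) (hε : 0 < ε) (hB : 0 < B) :
    ∃ M, ∀ z d e, IsMasterSolution ν νt c₁ c₂ z d e → ε ≤ ‖z‖ → ‖z‖ ≤ B →
      resolventMoment ν 2 e ≤ M := by
  obtain ⟨τ, hτ, hmass⟩ := exists_measure_abs_ge_pos hνt0
  set p := νt.real {t | τ ≤ |t|}
  have hp : 0 < p := ENNReal.toReal_pos hmass.ne' (measure_ne_top _ _)
  set k := B / √(c₁ * c₂)
  have hk : 0 < k := by positivity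
  -- `θ` is chosen so that the `θ √u` term below is absorbed by half of the lower bound
  set θ := ε * √p / (2 * c₁ * k) with hθ_def
  have hθ : c₁ * k * θ = ε * √p / 2 := by rw [hθ_def]; field_simp
  obtain ⟨A, hA, htail⟩ := exists_measureReal_abs_gt_le (μ := ν) (η := θ ^ 2) (by positivity)
  set X := max (2 * A * c₂ * k / ε) (2 * (ε * k + 2 * c₁ * k * τ * A) / (ε * √p * τ))
  refine ⟨X ^ 2, fun z d e h hεz hzB => ?_⟩
  set u := resolventMoment ν 2 e
  set v := resolventMoment νt 2 d
  have hxy : √u * √v ≤ k := (h.sqrt_mul_sqrt_le hνt hc₁ hc₂).trans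
    (div_le_div_of_nonneg_right hzB (Real.sqrt_nonneg _))
  have hlow : √p * τ ≤ √v * (1 + ‖d‖ * τ) := by
    have := Real.sqrt_le_sqrt (measureReal_mul_sq_le_resolventMoment (μ := νt) h.im_d_pos hτ.le)
    rwa [Real.sqrt_mul hp.le, Real.sqrt_sq (by positivity), mul_div_assoc',
      div_le_iff₀ (by positivity)] at this
  suffices hx : √u ≤ X by
    rw [← Real.sq_sqrt (show 0 ≤ u from resolventMoment_two_nonneg ν e)]
    exact pow_le_pow_left₀ (Real.sqrt_nonneg u) hx 2
  rcases le_or_gt √u (2 * A * c₂ * k / ε) with hsmall | hlarge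
  · exact le_max_of_le_left hsmall
  refine le_max_of_le_right ?_
  rw [div_lt_iff₀ hε] at hlarge
  have hv_small : 2 * A * c₂ * √v < ε := by
    refine lt_of_mul_lt_mul_left ?_ (Real.sqrt_nonneg u)
    nlinarith [mul_le_mul_of_nonneg_left hxy (by positivity : (0 : ℝ) ≤ 2 * A * c₂)]
  have heA : ‖e‖ * A ≤ 1 / 2 := by nlinarith [h.mul_norm_e_le hc₂.le hεz]
  have hd : ε * ‖d‖ ≤ c₁ * (2 * A + θ * √u) :=
    (mul_norm_le_of_mul_eq hc₁.le hεz h.mul_d).trans (mul_le_mul_of_nonneg_left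
      (norm_ratioIntegral_le h.im_e_pos hA.le (by positivity) heA htail) hc₁.le)
  have hθu : c₁ * k * θ * (τ * √u) = ε * √p / 2 * (τ * √u) := by rw [hθ]
  rw [le_div_iff₀ (by positivity)]
  nlinarith [mul_le_mul_of_nonneg_left hlow (by positivity : 0 ≤ ε * √u),
    mul_le_mul_of_nonneg_right hxy (by positivity : 0 ≤ ε * (1 + ‖d‖ * τ)),
    mul_le_mul_of_nonneg_left hd (by positivity : 0 ≤ k * τ)]

lemma exists_resolventMoment_le {ν νt : Measure ℝ} [IsProbabilityMeasure ν]
    [IsProbabilityMeasure νt] (hν : ν (Iio 0) = 0) (hνt : νt (Iio 0) = 0)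
    (hν0 : ν ≠ Measure.dirac 0) (hνt0 : νt ≠ Measure.dirac 0) {c₁ c₂ ε B : ℝ} (hc₁ : 0 < c₁)
    (hc₂ : 0 < c₂) (hε : 0 < ε) (hB : 0 < B) {ℓ : ℕ} (hℓ : ℓ = 1 ∨ ℓ = 2) :
    ∃ M, ∀ z d e, IsMasterSolution ν νt c₁ c₂ z d e → ε ≤ ‖z‖ → ‖z‖ ≤ B →
      resolventMoment ν ℓ e ≤ M := by
  obtain ⟨M₁, hM₁⟩ := exists_resolventMoment_two_le (ν := ν) hνt hνt0 hc₁ hc₂ hε hB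
  rcases hℓ with rfl | rfl
  · obtain ⟨M₂, hM₂⟩ := exists_resolventMoment_two_le (ν := νt) hν hν0 hc₂ hc₁ hε hB
    refine ⟨1 + (1 / 2 + (c₂ * √M₂ / ε) ^ 2) * M₁, fun z d e h hεz hzB => ?_⟩
    have he : ‖e‖ ≤ c₂ * √M₂ / ε := by
      rw [le_div_iff₀ hε, mul_comm]
      exact (h.mul_norm_e_le hc₂.le hεz).trans
        (by gcongr; exact hM₂ z e d h.symm hεz hzB)
    refine (resolventMoment_one_le h.im_e_pos).trans ?_
    gcongr
    · exact resolventMoment_two_nonneg ν e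
    · exact hM₁ z d e h hεz hzB
  · exact ⟨M₁, hM₁⟩

theorem stmt7 (ν νt : Measure ℝ) [IsProbabilityMeasure ν] [IsProbabilityMeasure νt]
    (hνpos : ν (Set.Iio (0 : ℝ)) = 0) (hνtpos : νt (Set.Iio (0 : ℝ)) = 0)
    (hν0 : ν ≠ Measure.dirac 0) (hνt0 : νt ≠ Measure.dirac 0)
    (c : ℝ) (hc : 0 < c)
    (δ δt : ℂ → ℂ) (hsol : ∀ z ∈ UpperHalf, IsPair ν νt c z (δ z) (δt z)) :
    ∀ ℓ : ℕ, ℓ = 1 ∨ ℓ = 2 →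
      ∀ R : Set ℂ, R ⊆ UpperHalf → Bornology.IsBounded R →
        (∃ ε > (0 : ℝ), ∀ z ∈ R, ε ≤ |z.re|) →
        (∃ M : ℝ, ∀ z ∈ R,
          (∫ t, t ^ ℓ / ‖1 + δt z * (t : ℂ)‖ ^ 2 ∂ν) ≤ M) ∧
        (∃ M : ℝ, ∀ z ∈ R,
          (∫ t, t ^ ℓ / ‖1 + δ z * (t : ℂ)‖ ^ 2 ∂νt) ≤ M) := by
  rintro ℓ hℓ R hRU hRB ⟨ε, hε, hεR⟩
  obtain ⟨B, hB, hzB⟩ := hRB.exists_pos_norm_le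
  have hR (z : ℂ) (hz : z ∈ R) : IsMasterSolution ν νt c 1 z (δ z) (δt z) :=
    (hsol z (hRU hz)).isMasterSolution (hRU hz)
  have hεz (z : ℂ) (hz : z ∈ R) : ε ≤ ‖z‖ := (hεR z hz).trans (Complex.abs_re_le_norm z)
  obtain ⟨M₁, hM₁⟩ := exists_resolventMoment_le hνpos hνtpos hν0 hνt0 hc one_pos hε hB hℓ
  obtain ⟨M₂, hM₂⟩ := exists_resolventMoment_le hνtpos hνpos hνt0 hν0 one_pos hc hε hB hℓ
  exact ⟨⟨M₁, fun z hz => hM₁ z _ _ (hR z hz) (hεz z hz) (hzB z hz)⟩,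
    ⟨M₂, fun z hz => hM₂ z _ _ (hR z hz).symm (hεz z hz) (hzB z hz)⟩⟩

end
end

section
/- Let (d̃₁, d₁, x₁) and (d̃₂, d₂, x₂) both be admissible triples. If d̃₁ ≠ d̃₂ then x₁ ≠ x₂, and if d₁ ≠ d₂ then x₁ ≠ x₂. -/
open MeasureTheory Set Filter Topology

noncomputable section

/-- The topological support of a measure on `ℝ`: the set of points all of whose open
neighborhoods have positive measure. -/
def msupport (μ : Measure ℝ) : Set ℝ := {x | ∀ U : Set ℝ, IsOpen U → x ∈ U → μ U ≠ 0}

open Classical in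
/-- The set `𝒟` associated with the measure `νt`. -/
def calD (νt : Measure ℝ) : Set ℝ :=
  {d | d ≠ 0 ∧ -d⁻¹ ∉ msupport νt} ∪ (if IsCompact (msupport νt) then {0} else ∅)

open Classical in
/-- The set `𝒟̃` associated with the measure `ν`. -/
def calDt (ν : Measure ℝ) : Set ℝ :=
  {d | d ≠ 0 ∧ -d⁻¹ ∉ msupport ν} ∪ (if IsCompact (msupport ν) then {0} else ∅)

/-- `γ(x, d̃) = c ∫ t²/(x²(1+d̃t)²) dν(t)`. -/
def gam (ν : Measure ℝ) (c x dt : ℝ) : ℝ := c * ∫ t, t ^ 2 / (x ^ 2 * (1 + dt * t) ^ 2) ∂ν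

/-- `γ̃(x, d) = ∫ t²/(x²(1+dt)²) dν̃(t)`. -/
def gamt (νt : Measure ℝ) (x d : ℝ) : ℝ := ∫ t, t ^ 2 / (x ^ 2 * (1 + d * t) ^ 2) ∂νt

/-- The triple `(d̃, d, x)` is admissible: `d̃ ∈ 𝒟̃`, `d ∈ 𝒟`, `x ≠ 0`, the master system
holds at `(d̃, d, x)`, and `1 - x² γ(x,d̃) γ̃(x,d) > 0`. -/
def Admissible (ν νt : Measure ℝ) (c : ℝ) (dt d x : ℝ) : Prop :=
  dt ∈ calDt ν ∧ d ∈ calD νt ∧ x ≠ 0 ∧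
  d = c * ∫ t, t / (-x * (1 + dt * t)) ∂ν ∧
  dt = ∫ t, t / (-x * (1 + d * t)) ∂νt ∧
  0 < 1 - x ^ 2 * gam ν c x dt * gamt νt x d

/-!
Fix `x` and write `K_a(t) = t / (1 + a t)`, which is bounded on the support when `a ∈ 𝒟̃`.
Since `K_a - K_b = (b - a) K_a K_b`, subtracting the master equations of two admissible triples
with the same `x` gives `d̃₁ - d̃₂ = (c / x²) P Q (d̃₁ - d̃₂)`, where `P = ∫ K_{d̃₁} K_{d̃₂} dν` and
`Q = ∫ K_{d₁} K_{d₂} dν̃`. By Cauchy–Schwarz, `(c P Q / x²)² ≤ x²γ₁γ̃₁ · x²γ₂γ̃₂ < 1`, so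
`d̃₁ = d̃₂`, and then `d₁ = d₂` by the first master equation.
-/

lemma msupport_eq_support (μ : Measure ℝ) : msupport μ = μ.support := by
  ext x
  simp only [msupport, mem_ofPred_eq, Measure.mem_support_iff_forall, pos_iff_ne_zero]
  constructor
  · intro h U hU
    obtain ⟨V, hVU, hVo, hxV⟩ := mem_nhds_iff.1 hU
    exact ne_bot_of_le_ne_bot (h V hVo hxV) (measure_mono hVU)
  · exact fun h U hUo hxU => h U (hUo.mem_nhds hxU)

/-- The master equations read `d = -(c/x) ∫ masterKernel d̃ dν` and
`d̃ = -(1/x) ∫ masterKernel d dν̃`. -/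
def masterKernel (a t : ℝ) : ℝ := t / (1 + a * t)

lemma measurable_masterKernel (a : ℝ) : Measurable (masterKernel a) :=
  measurable_id.div (measurable_const.add (measurable_id.const_mul a))

lemma masterKernel_sub_masterKernel {a b t : ℝ} (ha : 1 + a * t ≠ 0) (hb : 1 + b * t ≠ 0) :
    masterKernel a t - masterKernel b t = (b - a) * (masterKernel a t * masterKernel b t) := by
  have ea := inv_mul_cancel₀ ha
  have eb := inv_mul_cancel₀ hb
  simp only [masterKernel, div_eq_mul_inv]
  linear_combination (t * (1 + b * t)⁻¹) * ea - (t * (1 + a * t)⁻¹) * eb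

lemma exists_pos_le_abs_one_add_mul {s : Set ℝ} (hs : IsClosed s) {a : ℝ} (ha : a ≠ 0)
    (h : -a⁻¹ ∉ s) : ∃ δ > 0, ∀ t ∈ s, δ ≤ |1 + a * t| := by
  obtain ⟨r, hr, hball⟩ := Metric.isOpen_iff.1 hs.isOpen_compl _ h
  refine ⟨|a| * r, mul_pos (abs_pos.2 ha) hr, fun t ht => ?_⟩
  have hr_le : r ≤ |t + a⁻¹| := by
    by_contra! hlt
    exact hball (by rwa [Metric.mem_ball, Real.dist_eq, sub_neg_eq_add]) ht
  calc |a| * r ≤ |a| * |t + a⁻¹| := by gcongr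
    _ = |1 + a * t| := by rw [← abs_mul]; congr 1; field_simp; ring

lemma exists_bound_masterKernel_of_mem_calDt {μ : Measure ℝ} {a : ℝ} (ha : a ∈ calDt μ) :
    ∃ C, ∀ t ∈ μ.support, 1 + a * t ≠ 0 ∧ |masterKernel a t| ≤ C := by
  rcases ha with ⟨ha0, hsupp⟩ | hcompact
  · rw [msupport_eq_support] at hsupp
    obtain ⟨δ, hδ, hfar⟩ := exists_pos_le_abs_one_add_mul Measure.isClosed_support ha0 hsupp
    refine ⟨(1 + δ⁻¹) / |a|, fun t ht => ?_⟩
    have hne : 1 + a * t ≠ 0 := abs_pos.1 (hδ.trans_le (hfar t ht))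
    have hK : masterKernel a t = (1 - (1 + a * t)⁻¹) / a := by
      rw [eq_div_iff ha0, masterKernel, div_eq_mul_inv]
      linear_combination inv_mul_cancel₀ hne
    refine ⟨hne, ?_⟩
    rw [hK, abs_div]
    gcongr
    calc |1 - (1 + a * t)⁻¹| ≤ |1| + |(1 + a * t)⁻¹| := abs_sub _ _
      _ ≤ 1 + δ⁻¹ := by
        rw [abs_one, abs_inv]; gcongr; exact hfar t ht
  · split_ifs at hcompact with hcpt
    · rw [mem_singleton_iff] at hcompact
      subst hcompact
      obtain ⟨C, hC⟩ := isBounded_iff_forall_norm_le.1 hcpt.isBounded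
      refine ⟨C, fun t ht => ⟨by simp, ?_⟩⟩
      simpa [masterKernel] using hC t (by rwa [msupport_eq_support])
    · exact absurd hcompact (notMem_empty a)

section MemCalDt

variable {μ : Measure ℝ} [IsFiniteMeasure μ] {a b : ℝ}

lemma memLp_masterKernel (ha : a ∈ calDt μ) (p : ENNReal) : MemLp (masterKernel a) p μ := by
  obtain ⟨C, hC⟩ := exists_bound_masterKernel_of_mem_calDt ha
  refine MemLp.of_bound (measurable_masterKernel a).aestronglyMeasurable C ?_
  filter_upwards [Measure.support_mem_ae] with t ht
  exact (hC t ht).2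

lemma integral_masterKernel_sub (ha : a ∈ calDt μ) (hb : b ∈ calDt μ) :
    ∫ t, masterKernel a t ∂μ - ∫ t, masterKernel b t ∂μ =
      (b - a) * ∫ t, masterKernel a t * masterKernel b t ∂μ := by
  obtain ⟨A, hA⟩ := exists_bound_masterKernel_of_mem_calDt ha
  obtain ⟨B, hB⟩ := exists_bound_masterKernel_of_mem_calDt hb
  rw [← integral_sub ((memLp_masterKernel ha 1).integrable le_rfl)
    ((memLp_masterKernel hb 1).integrable le_rfl), ← integral_const_mul]
  refine integral_congr_ae ?_
  filter_upwards [Measure.support_mem_ae] with t ht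
  exact masterKernel_sub_masterKernel (hA t ht).1 (hB t ht).1

end MemCalDt

lemma sq_integral_mul_le {α : Type*} [MeasurableSpace α] {μ : Measure α} {f g : α → ℝ}
    (hf : MemLp f 2 μ) (hg : MemLp g 2 μ) :
    (∫ x, f x * g x ∂μ) ^ 2 ≤ (∫ x, f x ^ 2 ∂μ) * ∫ x, g x ^ 2 ∂μ := by
  have inner_toLp : ∀ {u v : α → ℝ} (hu : MemLp u 2 μ) (hv : MemLp v 2 μ),
      inner ℝ (hu.toLp u) (hv.toLp v) = ∫ x, u x * v x ∂μ := by
    intro u v hu hv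
    rw [L2.inner_def]
    refine integral_congr_ae ?_
    filter_upwards [hu.coeFn_toLp, hv.coeFn_toLp] with x hux hvx
    simp [hux, hvx, mul_comm]
  have := real_inner_mul_inner_self_le (hf.toLp f) (hg.toLp g)
  simp only [inner_toLp, ← sq] at this
  exact this

lemma integral_div_neg_mul_one_add_mul (μ : Measure ℝ) (x a : ℝ) :
    ∫ t, t / (-x * (1 + a * t)) ∂μ = -x⁻¹ * ∫ t, masterKernel a t ∂μ := by
  rw [← integral_const_mul]
  congr 1 with t
  simp only [masterKernel, div_eq_mul_inv, mul_inv, inv_neg]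
  ring

lemma integral_sq_div_sq_mul_sq (μ : Measure ℝ) (x a : ℝ) :
    ∫ t, t ^ 2 / (x ^ 2 * (1 + a * t) ^ 2) ∂μ = (x ^ 2)⁻¹ * ∫ t, masterKernel a t ^ 2 ∂μ := by
  rw [← integral_const_mul]
  congr 1 with t
  simp only [masterKernel, div_eq_mul_inv, mul_inv, mul_pow, inv_pow]
  ring

lemma sq_mul_gam_mul_gamt (ν νt : Measure ℝ) {c x : ℝ} (hx : x ≠ 0) (a b : ℝ) :
    x ^ 2 * gam ν c x a * gamt νt x b =
      c / x ^ 2 * ((∫ t, masterKernel a t ^ 2 ∂ν) * ∫ t, masterKernel b t ^ 2 ∂νt) := by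
  rw [gam, gamt, integral_sq_div_sq_mul_sq, integral_sq_div_sq_mul_sq]
  field_simp

lemma sq_mul_mul_lt_one {κ P Q J₁ J₂ K₁ K₂ : ℝ} (hP : P ^ 2 ≤ J₁ * J₂) (hQ : Q ^ 2 ≤ K₁ * K₂)
    (h₀ : 0 ≤ κ * (J₁ * K₁)) (h₁ : κ * (J₁ * K₁) < 1) (h₂ : κ * (J₂ * K₂) < 1) :
    (κ * (P * Q)) ^ 2 < 1 :=
  calc (κ * (P * Q)) ^ 2 = κ ^ 2 * (P ^ 2 * Q ^ 2) := by ring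
    _ ≤ κ ^ 2 * ((J₁ * J₂) * (K₁ * K₂)) :=
        mul_le_mul_of_nonneg_left (mul_le_mul hP hQ (sq_nonneg Q) ((sq_nonneg P).trans hP))
          (sq_nonneg κ)
    _ = (κ * (J₁ * K₁)) * (κ * (J₂ * K₂)) := by ring
    _ < 1 := by nlinarith

theorem Admissible.unique {ν νt : Measure ℝ} [IsFiniteMeasure ν] [IsFiniteMeasure νt] {c : ℝ}
    (hc : 0 ≤ c) {dt₁ d₁ dt₂ d₂ x : ℝ} (h₁ : Admissible ν νt c dt₁ d₁ x)
    (h₂ : Admissible ν νt c dt₂ d₂ x) : dt₁ = dt₂ ∧ d₁ = d₂ := by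
  obtain ⟨hdt₁, hd₁, hx, he₁, hf₁, hpos₁⟩ := h₁
  obtain ⟨hdt₂, hd₂, -, he₂, hf₂, hpos₂⟩ := h₂
  simp only [integral_div_neg_mul_one_add_mul] at he₁ he₂ hf₁ hf₂
  rw [sq_mul_gam_mul_gamt ν νt hx] at hpos₁ hpos₂
  have hP := integral_masterKernel_sub hdt₁ hdt₂
  have hQ := integral_masterKernel_sub (μ := νt) hd₁ hd₂
  set P := ∫ t, masterKernel dt₁ t * masterKernel dt₂ t ∂ν
  set Q := ∫ t, masterKernel d₁ t * masterKernel d₂ t ∂νt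
  have hd_sub : d₁ - d₂ = c * x⁻¹ * (dt₁ - dt₂) * P := by
    linear_combination he₁ - he₂ - c * x⁻¹ * hP
  have hdt_sub : dt₁ - dt₂ = x⁻¹ * (d₁ - d₂) * Q := by
    linear_combination hf₁ - hf₂ - x⁻¹ * hQ
  have hfix : (dt₁ - dt₂) * (1 - c / x ^ 2 * (P * Q)) = 0 := by
    linear_combination hdt_sub + x⁻¹ * Q * hd_sub
  have hlt : (c / x ^ 2 * (P * Q)) ^ 2 < 1 :=
    sq_mul_mul_lt_one (sq_integral_mul_le (memLp_masterKernel hdt₁ 2) (memLp_masterKernel hdt₂ 2))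
      (sq_integral_mul_le (memLp_masterKernel hd₁ 2) (memLp_masterKernel hd₂ 2))
      (by positivity) (by linarith) (by linarith)
  have hdt : dt₁ = dt₂ := by
    refine sub_eq_zero.1 ((mul_eq_zero.1 hfix).resolve_right fun h => ?_)
    rw [← sub_eq_zero.1 h] at hlt
    norm_num at hlt
  exact ⟨hdt, by rw [he₁, he₂, hdt]⟩

theorem stmt13_general (ν νt : Measure ℝ) [IsProbabilityMeasure ν] [IsProbabilityMeasure νt]
    (c : ℝ) (hc : 0 < c)
    (dt₁ d₁ x₁ dt₂ d₂ x₂ : ℝ)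
    (hadm₁ : Admissible ν νt c dt₁ d₁ x₁) (hadm₂ : Admissible ν νt c dt₂ d₂ x₂) :
    (dt₁ ≠ dt₂ → x₁ ≠ x₂) ∧ (d₁ ≠ d₂ → x₁ ≠ x₂) := by
  constructor
  · rintro hne rfl
    exact hne (hadm₁.unique hc.le hadm₂).1
  · rintro hne rfl
    exact hne (hadm₁.unique hc.le hadm₂).2

theorem stmt13 (ν νt : Measure ℝ) [IsProbabilityMeasure ν] [IsProbabilityMeasure νt]
    (hνpos : ν (Set.Iio (0 : ℝ)) = 0) (hνtpos : νt (Set.Iio (0 : ℝ)) = 0)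
    (hν0 : ν ≠ Measure.dirac 0) (hνt0 : νt ≠ Measure.dirac 0)
    (c : ℝ) (hc : 0 < c)
    (dt₁ d₁ x₁ dt₂ d₂ x₂ : ℝ)
    (hadm₁ : Admissible ν νt c dt₁ d₁ x₁) (hadm₂ : Admissible ν νt c dt₂ d₂ x₂) :
    (dt₁ ≠ dt₂ → x₁ ≠ x₂) ∧ (d₁ ≠ d₂ → x₁ ≠ x₂) :=
  stmt13_general ν νt c hc dt₁ d₁ x₁ dt₂ d₂ x₂ hadm₁ hadm₂
end
end
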